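/- For every H ∈ (0,1) there exist c_H > 0 and T₀ ≥ 2 such that for all T ≥ T₀, all h ∈ (0,1], and all s = (s₁,s₂), s̃ = (s̃₁,s̃₂) ∈ (0,T]² with s₁s₂ ≤ 1, s̃₁s̃₂ ≤ 1, |s₁ − s̃₁| ≤ hT, and |s₁s₂ − s̃₁s̃₂| ≤ h, one has K_H(s,s) + K_H(s̃,s̃) − 2K_H(s,s̃) ≤ c_H·(1 + 2T^{−2}h^{−1})^{−2H}, where K_H(s,t) = B(s₁,t₁)·B(s₂,t₂) and B(a,b) = (a^{2H} + b^{2H} − |a−b|^{2H})/2. -/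

import Mathlib

/-!
Split `x(s) − x(s')` into the increments along `s → (s'₁, s₂) → s'`. Their standard deviations
are `(|s₁ − s'₁| s₂)^H ≤ (T²h)^H` and `(s'₁ |s₂ − s'₂|)^H ≤ (2T²h)^H`, so the variance is at most
`4 (2T²h)^{2H}`; it is also at most `((s₁s₂)^H + (s'₁s'₂)^H)² ≤ 4`, and the smaller of the two
bounds is within a factor `36` of `(1 + 2/(T²h))^{−2H}`. The Cauchy–Schwarz steps are elementary:
for `a, b ≥ 0` the numbers `a^H`, `b^H`, `|a − b|^H` satisfy the triangle inequalities, since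
`t ↦ t^H` is subadditive.
-/

/-- Covariance of fractional Brownian motion of Hurst index `H`:
`B(a,b) = (a^{2H} + b^{2H} − |a−b|^{2H})/2`. -/
noncomputable def fbmCov (H a b : ℝ) : ℝ := (a ^ (2*H) + b ^ (2*H) - |a - b| ^ (2*H)) / 2

/-- Covariance of the fractional Brownian sheet of index `H`:
`K_H(s,t) = B(s₁,t₁)·B(s₂,t₂)`. -/
noncomputable def KH (H : ℝ) (s t : ℝ × ℝ) : ℝ := fbmCov H s.1 t.1 * fbmCov H s.2 t.2

lemma Real.rpow_two_mul_eq_sq {x : ℝ} (hx : 0 ≤ x) (H : ℝ) : x ^ (2 * H) = (x ^ H) ^ 2 := by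
  rw [mul_comm, ← Real.rpow_mul_natCast hx]
  norm_num

lemma abs_sq_sub_sq_sub_sq_le_of_triangle {u v w : ℝ}
    (hw_le : w ≤ u + v) (hu_le : u ≤ v + w) (hv_le : v ≤ w + u) :
    |w ^ 2 - u ^ 2 - v ^ 2| ≤ 2 * (u * v) := by
  rw [abs_le]
  constructor <;> nlinarith

lemma abs_rpow_two_mul_sub_sub_le_of_triangle {H x y z : ℝ} (hH0 : 0 ≤ H) (hH1 : H ≤ 1)
    (hx : 0 ≤ x) (hy : 0 ≤ y) (hz : 0 ≤ z)
    (hz_le : z ≤ x + y) (hx_le : x ≤ y + z) (hy_le : y ≤ z + x) :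
    |z ^ (2 * H) - x ^ (2 * H) - y ^ (2 * H)| ≤ 2 * (x ^ H * y ^ H) := by
  have rpow_le {a b c : ℝ} (ha : 0 ≤ a) (hb : 0 ≤ b) (hc : 0 ≤ c) (h : a ≤ b + c) :
      a ^ H ≤ b ^ H + c ^ H :=
    (Real.rpow_le_rpow ha h hH0).trans (Real.rpow_add_le_add_rpow hb hc hH0 hH1)
  rw [Real.rpow_two_mul_eq_sq hx, Real.rpow_two_mul_eq_sq hy, Real.rpow_two_mul_eq_sq hz]
  exact abs_sq_sub_sq_sub_sq_le_of_triangle (rpow_le hz hx hy hz_le) (rpow_le hx hy hz hx_le)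
    (rpow_le hy hz hx hy_le)

section

variable {H : ℝ}

lemma fbmCov_comm (a b : ℝ) : fbmCov H a b = fbmCov H b a := by
  simp only [fbmCov, abs_sub_comm a b, add_comm (a ^ (2 * H))]

lemma fbmCov_self (hH : 0 < H) (a : ℝ) : fbmCov H a a = a ^ (2 * H) := by
  simp only [fbmCov, sub_self, abs_zero, Real.zero_rpow (by positivity : 2 * H ≠ 0)]
  ring

lemma abs_fbmCov_le (hH0 : 0 ≤ H) (hH1 : H ≤ 1) {a b : ℝ} (ha : 0 ≤ a) (hb : 0 ≤ b) :
    |fbmCov H a b| ≤ a ^ H * b ^ H := by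
  have := abs_rpow_two_mul_sub_sub_le_of_triangle hH0 hH1 ha hb (abs_nonneg (a - b))
    (by cases abs_cases (a - b) <;> linarith) (by cases abs_cases (a - b) <;> linarith)
    (by cases abs_cases (a - b) <;> linarith)
  have h : fbmCov H a b = -(|a - b| ^ (2 * H) - a ^ (2 * H) - b ^ (2 * H)) / 2 := by
    rw [fbmCov]; ring
  rw [h, abs_div, abs_neg, abs_two]
  linarith

lemma abs_fbmCov_sub_rpow_le (hH0 : 0 ≤ H) (hH1 : H ≤ 1) {a b : ℝ} (ha : 0 ≤ a) (hb : 0 ≤ b) :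
    |fbmCov H a b - b ^ (2 * H)| ≤ |a - b| ^ H * b ^ H := by
  have := abs_rpow_two_mul_sub_sub_le_of_triangle hH0 hH1 (abs_nonneg (a - b)) hb ha
    (by cases abs_cases (a - b) <;> linarith) (by cases abs_cases (a - b) <;> linarith)
    (by cases abs_cases (a - b) <;> linarith)
  have h : fbmCov H a b - b ^ (2 * H) = (a ^ (2 * H) - |a - b| ^ (2 * H) - b ^ (2 * H)) / 2 := by
    rw [fbmCov]; ring
  rw [h, abs_div, abs_two]
  linarith

lemma KH_self (hH : 0 < H) (s : ℝ × ℝ) : KH H s s = s.1 ^ (2 * H) * s.2 ^ (2 * H) := by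
  rw [KH, fbmCov_self hH, fbmCov_self hH]

/-- Split `x(s) − x(s')` along the path `s → (s'.1, s.2) → s'`: the two increments have the
variances in the first two terms and the covariance in the last one. -/
lemma KH_variogram_eq (hH : 0 < H) (s s' : ℝ × ℝ) :
    KH H s s + KH H s' s' - 2 * KH H s s' =
      |s.1 - s'.1| ^ (2 * H) * s.2 ^ (2 * H) + s'.1 ^ (2 * H) * |s.2 - s'.2| ^ (2 * H) +
        2 * ((fbmCov H s.1 s'.1 - s'.1 ^ (2 * H)) * (s.2 ^ (2 * H) - fbmCov H s.2 s'.2)) := by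
  simp only [KH, fbmCov, sub_self, abs_zero, Real.zero_rpow (by positivity : 2 * H ≠ 0)]
  ring

lemma KH_variogram_le_sq_increments (hH0 : 0 < H) (hH1 : H ≤ 1) {s s' : ℝ × ℝ}
    (hs₁ : 0 ≤ s.1) (hs₂ : 0 ≤ s.2) (hs'₁ : 0 ≤ s'.1) (hs'₂ : 0 ≤ s'.2) :
    KH H s s + KH H s' s' - 2 * KH H s s' ≤
      ((|s.1 - s'.1| * s.2) ^ H + (s'.1 * |s.2 - s'.2|) ^ H) ^ 2 := by
  have cross : (fbmCov H s.1 s'.1 - s'.1 ^ (2 * H)) * (s.2 ^ (2 * H) - fbmCov H s.2 s'.2) ≤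
      (|s.1 - s'.1| ^ H * s'.1 ^ H) * (|s.2 - s'.2| ^ H * s.2 ^ H) := by
    have h₂ := abs_fbmCov_sub_rpow_le hH0.le hH1 hs'₂ hs₂
    rw [fbmCov_comm, abs_sub_comm, abs_sub_comm s'.2] at h₂
    refine (le_abs_self _).trans ?_
    rw [abs_mul]
    exact mul_le_mul (abs_fbmCov_sub_rpow_le hH0.le hH1 hs₁ hs'₁) h₂ (abs_nonneg _)
      (by positivity)
  rw [KH_variogram_eq hH0, Real.mul_rpow (abs_nonneg _) hs₂, Real.mul_rpow hs'₁ (abs_nonneg _),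
    Real.rpow_two_mul_eq_sq (abs_nonneg _), Real.rpow_two_mul_eq_sq (abs_nonneg _)]
  rw [Real.rpow_two_mul_eq_sq hs₂, Real.rpow_two_mul_eq_sq hs'₁] at cross ⊢
  linarith

lemma KH_variogram_le_sq_diag (hH0 : 0 < H) (hH1 : H ≤ 1) {s s' : ℝ × ℝ}
    (hs₁ : 0 ≤ s.1) (hs₂ : 0 ≤ s.2) (hs'₁ : 0 ≤ s'.1) (hs'₂ : 0 ≤ s'.2) :
    KH H s s + KH H s' s' - 2 * KH H s s' ≤ ((s.1 * s.2) ^ H + (s'.1 * s'.2) ^ H) ^ 2 := by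
  have cross : -KH H s s' ≤ (s.1 * s.2) ^ H * (s'.1 * s'.2) ^ H := by
    refine (neg_le_abs _).trans ?_
    rw [KH, abs_mul, Real.mul_rpow hs₁ hs₂, Real.mul_rpow hs'₁ hs'₂]
    calc |fbmCov H s.1 s'.1| * |fbmCov H s.2 s'.2|
        ≤ (s.1 ^ H * s'.1 ^ H) * (s.2 ^ H * s'.2 ^ H) :=
          mul_le_mul (abs_fbmCov_le hH0.le hH1 hs₁ hs'₁) (abs_fbmCov_le hH0.le hH1 hs₂ hs'₂)
            (abs_nonneg _) (by positivity)
      _ = s.1 ^ H * s.2 ^ H * (s'.1 ^ H * s'.2 ^ H) := by ring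
  rw [KH_self hH0, KH_self hH0, ← Real.mul_rpow hs₁ hs₂, ← Real.mul_rpow hs'₁ hs'₂,
    Real.rpow_two_mul_eq_sq (by positivity), Real.rpow_two_mul_eq_sq (by positivity)]
  linarith

lemma KH_variogram_le_of_close (hH0 : 0 < H) (hH1 : H ≤ 1) {T h : ℝ} (hT : 1 ≤ T) (hh : 0 < h)
    {s s' : ℝ × ℝ} (hs₁ : 0 ≤ s.1) (hs₂ : 0 ≤ s.2) (hs₂T : s.2 ≤ T) (hs'₁ : 0 ≤ s'.1)
    (hs'₂ : 0 ≤ s'.2) (hd₁ : |s.1 - s'.1| ≤ h * T) (hd₂ : |s.1 * s.2 - s'.1 * s'.2| ≤ h) :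
    KH H s s + KH H s' s' - 2 * KH H s s' ≤ 4 * (2 * (T ^ 2 * h)) ^ (2 * H) := by
  have hT₀ : 0 < T := by linarith
  have hfirst : |s.1 - s'.1| * s.2 ≤ T ^ 2 * h := by
    calc |s.1 - s'.1| * s.2 ≤ h * T * T := mul_le_mul hd₁ hs₂T hs₂ (by positivity)
      _ = T ^ 2 * h := by ring
  have hsecond : s'.1 * |s.2 - s'.2| ≤ 2 * (T ^ 2 * h) := by
    calc s'.1 * |s.2 - s'.2| = |s'.1 * (s'.2 - s.2)| := by
          rw [abs_mul, abs_of_nonneg hs'₁, abs_sub_comm]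
      _ = |(s.1 - s'.1) * s.2 - (s.1 * s.2 - s'.1 * s'.2)| := by congr 1; ring
      _ ≤ |(s.1 - s'.1) * s.2| + |s.1 * s.2 - s'.1 * s'.2| := abs_sub _ _
      _ = |s.1 - s'.1| * s.2 + |s.1 * s.2 - s'.1 * s'.2| := by rw [abs_mul, abs_of_nonneg hs₂]
      _ ≤ T ^ 2 * h + T ^ 2 * h := add_le_add hfirst (hd₂.trans (le_mul_of_one_le_left hh.le
          (one_le_pow₀ hT)))
      _ = 2 * (T ^ 2 * h) := by ring
  calc KH H s s + KH H s' s' - 2 * KH H s s'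
      ≤ ((|s.1 - s'.1| * s.2) ^ H + (s'.1 * |s.2 - s'.2|) ^ H) ^ 2 :=
        KH_variogram_le_sq_increments hH0 hH1 hs₁ hs₂ hs'₁ hs'₂
    _ ≤ ((2 * (T ^ 2 * h)) ^ H + (2 * (T ^ 2 * h)) ^ H) ^ 2 := by
        gcongr (?_ ^ _ + ?_ ^ _) ^ 2
        linarith [mul_pos (pow_pos hT₀ 2) hh]
    _ = 4 * (2 * (T ^ 2 * h)) ^ (2 * H) := by
        rw [Real.rpow_two_mul_eq_sq (by positivity)]; ring

lemma KH_variogram_le_four (hH0 : 0 < H) (hH1 : H ≤ 1) {s s' : ℝ × ℝ}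
    (hs₁ : 0 ≤ s.1) (hs₂ : 0 ≤ s.2) (hs'₁ : 0 ≤ s'.1) (hs'₂ : 0 ≤ s'.2)
    (hs : s.1 * s.2 ≤ 1) (hs' : s'.1 * s'.2 ≤ 1) :
    KH H s s + KH H s' s' - 2 * KH H s s' ≤ 4 := by
  calc KH H s s + KH H s' s' - 2 * KH H s s' ≤ ((s.1 * s.2) ^ H + (s'.1 * s'.2) ^ H) ^ 2 :=
        KH_variogram_le_sq_diag hH0 hH1 hs₁ hs₂ hs'₁ hs'₂
    _ ≤ (1 + 1) ^ 2 := by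
        gcongr
        · exact Real.rpow_le_one (by positivity) hs hH0.le
        · exact Real.rpow_le_one (by positivity) hs' hH0.le
    _ = 4 := by norm_num

end

lemma min_one_rpow_le {p y : ℝ} (hp0 : 0 ≤ p) (hp2 : p ≤ 2) (hy : 0 < y) :
    min 1 ((2 * y) ^ p) ≤ 36 * (1 + 2 / y) ^ (-p) := by
  have key : min 1 (2 * y) ≤ 6 * (1 + 2 / y)⁻¹ := by
    rw [show 6 * (1 + 2 / y)⁻¹ = 6 * y / (y + 2) by field_simp, le_div_iff₀ (by positivity)]
    rcases le_total 1 (2 * y) with h | h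
    · rw [min_eq_left h]; linarith
    · rw [min_eq_right h]; nlinarith
  calc min 1 ((2 * y) ^ p) ≤ (min 1 (2 * y)) ^ p := by
        rcases le_total 1 (2 * y) with h | h
        · rw [min_eq_left h, Real.one_rpow]; exact min_le_left _ _
        · rw [min_eq_right h]; exact min_le_right _ _
    _ ≤ (6 * (1 + 2 / y)⁻¹) ^ p :=
        Real.rpow_le_rpow (le_min zero_le_one (by positivity)) key hp0
    _ = 6 ^ p * (1 + 2 / y) ^ (-p) := by
        rw [Real.mul_rpow (by norm_num) (by positivity), Real.inv_rpow (by positivity),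
          Real.rpow_neg (by positivity)]
    _ ≤ 6 ^ (2 : ℝ) * (1 + 2 / y) ^ (-p) := by
        gcongr
        norm_num
    _ = 36 * (1 + 2 / y) ^ (-p) := by norm_num

/-- first assertion of Lemma 1: for every `H ∈ (0,1)` there exist `c_H > 0`
and `T₀ ≥ 2` such that for all `T ≥ T₀`, `h ∈ (0,1]` and `s, s̃ ∈ (0,T]²` with
`s₁s₂ ≤ 1`, `s̃₁s̃₂ ≤ 1`, `|s₁−s̃₁| ≤ hT`, `|s₁s₂−s̃₁s̃₂| ≤ h`, one has
`E|x(s)−x(s̃)|² ≤ c_H (1 + 2T⁻²h⁻¹)^{−2H}`. -/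
theorem statement15 (H : ℝ) (hH : H ∈ Set.Ioo (0:ℝ) 1) :
    ∃ cH > (0:ℝ), ∃ T₀ : ℝ, 2 ≤ T₀ ∧
      ∀ T : ℝ, T₀ ≤ T → ∀ h : ℝ, h ∈ Set.Ioc (0:ℝ) 1 → ∀ s s' : ℝ × ℝ,
        s.1 ∈ Set.Ioc (0:ℝ) T → s.2 ∈ Set.Ioc (0:ℝ) T →
        s'.1 ∈ Set.Ioc (0:ℝ) T → s'.2 ∈ Set.Ioc (0:ℝ) T →
        s.1 * s.2 ≤ 1 → s'.1 * s'.2 ≤ 1 →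
        |s.1 - s'.1| ≤ h * T → |s.1 * s.2 - s'.1 * s'.2| ≤ h →
        KH H s s + KH H s' s' - 2 * KH H s s'
          ≤ cH * (1 + 2 / T^2 / h) ^ (-(2*H)) := by
  obtain ⟨hH0, hH1⟩ := hH
  refine ⟨144, by norm_num, 2, le_rfl, ?_⟩
  intro T hT h hh s s' hs₁ hs₂ hs'₁ hs'₂ hs hs' hd₁ hd₂
  have close := KH_variogram_le_of_close hH0 hH1.le (by linarith) hh.1 hs₁.1.le hs₂.1.le hs₂.2
    hs'₁.1.le hs'₂.1.le hd₁ hd₂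
  have far := KH_variogram_le_four hH0 hH1.le hs₁.1.le hs₂.1.le hs'₁.1.le hs'₂.1.le hs hs'
  calc KH H s s + KH H s' s' - 2 * KH H s s' ≤ 4 * min 1 ((2 * (T ^ 2 * h)) ^ (2 * H)) := by
        rw [mul_min_of_nonneg _ _ (by norm_num), mul_one]
        exact le_min far close
    _ ≤ 4 * (36 * (1 + 2 / (T ^ 2 * h)) ^ (-(2 * H))) := by
        gcongr
        exact min_one_rpow_le (by linarith) (by linarith)
          (mul_pos (pow_pos (by linarith) 2) hh.1)
    _ = 144 * (1 + 2 / T ^ 2 / h) ^ (-(2 * H)) := by rw [div_div]; ring
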